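/- arXiv:1506.05328 — 6 statements merged into one kernel-verified Lean document; each statement's English description precedes it below -/
import Mathlib

section
/- If f: ℝⁿ → ℝ is strongly convex with constant σ_f > 0 on a convex set U, and g = (g₁,...,g_p) are convex differentiable functions with Jacobian bounded in Frobenius norm by c_g on U, then the map x ↦ u(x) := argmin_{u ∈ U} [f(u) + ⟨x, g(u)⟩] is Lipschitz continuous on the nonnegative orthant ℝᵖ₊ with constant c_g/σ_f, i.e. ‖u(x) - u(x̄)‖ ≤ (c_g/σ_f)‖x - x̄‖ for all x, x̄ ≥ 0. -/
/-! For `x ≥ 0` the Lagrangian `L(·, x)` is `σ_f`-strongly convex on `U`, so its minimizer has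
quadratic growth: `L(w, x) ≥ L(u(x), x) + σ_f / 2 ‖w - u(x)‖²` on `U`. Adding this inequality at
`u(x)` with `w = u(x̄)` and at `u(x̄)` with `w = u(x)` cancels `f` and leaves
`σ_f ‖u(x) - u(x̄)‖² ≤ ⟪x - x̄, g(u(x̄)) - g(u(x))⟫ ≤ ‖x - x̄‖ ‖g(u(x̄)) - g(u(x))‖`.
Finally `g` is `c_g`-Lipschitz on `U` by the mean value theorem, because the Frobenius norm of the
Jacobian dominates its operator norm. -/

open scoped RealInnerProductSpace
open Filter Set Topology

section

variable {E : Type*} [NormedAddCommGroup E] [InnerProductSpace ℝ E]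

theorem strongConvexOn_of_add_inner_le {s : Set E} (hs : Convex ℝ s) {f : E → ℝ} (f' : E → E)
    {m : ℝ} (h : ∀ x ∈ s, ∀ y ∈ s, f y + ⟪f' y, x - y⟫ + m / 2 * ‖x - y‖ ^ 2 ≤ f x) :
    StrongConvexOn s m f := by
  refine ⟨hs, fun x hx y hy a b ha hb hab => ?_⟩
  obtain rfl : b = 1 - a := by linarith
  set z := a • x + (1 - a) • y
  have hxz : x - z = (1 - a) • (x - y) := by module
  have hyz : y - z = (-a) • (x - y) := by module
  have hx' := h x hx z (hs hx hy ha hb hab)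
  have hy' := h y hy z (hs hx hy ha hb hab)
  rw [hxz, inner_smul_right, norm_smul, Real.norm_of_nonneg hb] at hx'
  rw [hyz, inner_smul_right, norm_smul, norm_neg, Real.norm_of_nonneg ha] at hy'
  rw [smul_eq_mul, smul_eq_mul]
  linear_combination a * hx' + (1 - a) * hy'

theorem convexOn_of_add_inner_le {s : Set E} (hs : Convex ℝ s) {f : E → ℝ} (f' : E → E)
    (h : ∀ x ∈ s, ∀ y ∈ s, f y + ⟪f' y, x - y⟫ ≤ f x) : ConvexOn ℝ s f :=
  strongConvexOn_zero.1 <| strongConvexOn_of_add_inner_le hs f' <| by simpa using h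

theorem StrongConvexOn.add_convexOn {s : Set E} {m : ℝ} {f g : E → ℝ}
    (hf : StrongConvexOn s m f) (hg : ConvexOn ℝ s g) : StrongConvexOn s m (f + g) := by
  have := hf.add (uniformConvexOn_zero.2 hg)
  rwa [add_zero] at this

theorem StrongConvexOn.add_sq_norm_sub_le_of_isMinOn {s : Set E} {m : ℝ} {f : E → ℝ} {u w : E}
    (hf : StrongConvexOn s m f) (hu : u ∈ s) (hmin : IsMinOn f s u) (hw : w ∈ s) :
    f u + m / 2 * ‖w - u‖ ^ 2 ≤ f w := by
  -- `u` is no larger than the points of the segment towards `w`; then let `t → 0`.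
  have hstep : ∀ t ∈ Ioo (0 : ℝ) 1, f u + (1 - t) * (m / 2 * ‖w - u‖ ^ 2) ≤ f w := by
    rintro t ⟨ht0, ht1⟩
    have hseg := hf.2 hw hu ht0.le (sub_nonneg.2 ht1.le) (add_sub_cancel t 1)
    have hle : f u ≤ f (t • w + (1 - t) • u) :=
      hmin (hf.1 hw hu ht0.le (sub_nonneg.2 ht1.le) (add_sub_cancel t 1))
    simp only [smul_eq_mul] at hseg
    refine le_of_mul_le_mul_left ?_ ht0
    linear_combination hle.trans hseg
  have hlim : Tendsto (fun t : ℝ => f u + (1 - t) * (m / 2 * ‖w - u‖ ^ 2)) (𝓝[>] 0)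
      (𝓝 (f u + m / 2 * ‖w - u‖ ^ 2)) := by
    have : Continuous fun t : ℝ => f u + (1 - t) * (m / 2 * ‖w - u‖ ^ 2) := by fun_prop
    simpa using (this.tendsto 0).mono_left nhdsWithin_le_nhds
  exact le_of_tendsto hlim (eventually_of_mem (Ioo_mem_nhdsGT one_pos) hstep)

variable {ι : Type*}

noncomputable def innerPiCLM (D : ι → E) : E →L[ℝ] EuclideanSpace ℝ ι :=
  (PiLp.continuousLinearEquiv 2 ℝ fun _ : ι => ℝ).symm.toContinuousLinearMap ∘L
    ContinuousLinearMap.pi fun i => innerSL ℝ (D i)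

@[simp]
theorem innerPiCLM_apply (D : ι → E) (v : E) (i : ι) : innerPiCLM D v i = ⟪D i, v⟫ := rfl

theorem norm_innerPiCLM_le [Fintype ι] (D : ι → E) : ‖innerPiCLM D‖ ≤ √(∑ i, ‖D i‖ ^ 2) := by
  refine ContinuousLinearMap.opNorm_le_bound _ (Real.sqrt_nonneg _) fun v => ?_
  rw [EuclideanSpace.norm_eq, ← Real.sqrt_sq (norm_nonneg v), ← Real.sqrt_mul (by positivity),
    Finset.sum_mul]
  gcongr with i
  simpa [Real.norm_eq_abs, sq_abs, mul_pow] using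
    pow_le_pow_left₀ (abs_nonneg _) (abs_real_inner_le_norm (D i) v) 2

theorem Convex.norm_sub_le_of_hasGradientAt_apply [CompleteSpace E] [Fintype ι] {s : Set E}
    (hs : Convex ℝ s) {g : E → EuclideanSpace ℝ ι} {D : E → ι → E} {c : ℝ}
    (hg : ∀ i, ∀ v ∈ s, HasGradientAt (fun w => g w i) (D v i) v)
    (hD : ∀ v ∈ s, √(∑ i, ‖D v i‖ ^ 2) ≤ c) {a b : E} (ha : a ∈ s) (hb : b ∈ s) :
    ‖g a - g b‖ ≤ c * ‖a - b‖ := by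
  have hderiv : ∀ v ∈ s, HasFDerivWithinAt g (innerPiCLM (D v)) s v := fun v hv =>
    (hasFDerivWithinAt_piLp 2).2 fun i => (hg i v hv).hasFDerivAt.hasFDerivWithinAt
  exact hs.norm_image_sub_le_of_norm_hasFDerivWithin_le hderiv
    (fun v hv => (norm_innerPiCLM_le (D v)).trans (hD v hv)) hb ha

end

def lagrangian {E F : Type*} [Inner ℝ F] (f : E → ℝ) (g : E → F) (x : F) (u : E) : ℝ :=
  f u + ⟪x, g u⟫

section

variable {E F : Type*} [NormedAddCommGroup E] [InnerProductSpace ℝ E]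
  [NormedAddCommGroup F] [InnerProductSpace ℝ F]

theorem mul_sq_norm_sub_le_inner_of_isMinOn_lagrangian {s : Set E} {m : ℝ} {f : E → ℝ}
    {g : E → F} {x y : F} {u v : E} (hx : StrongConvexOn s m (lagrangian f g x))
    (hy : StrongConvexOn s m (lagrangian f g y)) (hu : u ∈ s) (hv : v ∈ s)
    (hxu : IsMinOn (lagrangian f g x) s u) (hyv : IsMinOn (lagrangian f g y) s v) :
    m * ‖u - v‖ ^ 2 ≤ ⟪x - y, g v - g u⟫ := by
  have hgrowth_u := hx.add_sq_norm_sub_le_of_isMinOn hu hxu hv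
  have hgrowth_v := hy.add_sq_norm_sub_le_of_isMinOn hv hyv hu
  rw [norm_sub_rev] at hgrowth_u
  simp only [lagrangian, inner_sub_left, inner_sub_right] at *
  linarith

end

section

variable {E ι : Type*} [Fintype ι]

theorem lagrangian_apply_eq_sum (f : E → ℝ) (g : E → EuclideanSpace ℝ ι)
    (x : EuclideanSpace ℝ ι) (u : E) : lagrangian f g x u = f u + ∑ i, x i * g u i := by
  simp [lagrangian, PiLp.inner_apply, mul_comm]

theorem strongConvexOn_lagrangian [NormedAddCommGroup E] [InnerProductSpace ℝ E] {s : Set E}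
    {m : ℝ} {f : E → ℝ} {g : E → EuclideanSpace ℝ ι} {x : EuclideanSpace ℝ ι}
    (hf : StrongConvexOn s m f) (hg : ∀ i, ConvexOn ℝ s fun u => g u i) (hx : ∀ i, 0 ≤ x i) :
    StrongConvexOn s m (lagrangian f g x) := by
  have hsum : ConvexOn ℝ s (∑ i, fun u => x i • g u i) :=
    Finset.sum_induction _ (ConvexOn ℝ s) (fun _ _ => ConvexOn.add) (convexOn_const 0 hf.1)
      fun i _ => (hg i).smul (hx i)
  convert hf.add_convexOn hsum using 1
  ext u
  simp [lagrangian_apply_eq_sum, Finset.sum_apply]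

end

theorem lagrangian_minimizer_lipschitz_general {n p : ℕ}
    (U : Set (EuclideanSpace ℝ (Fin n)))
    (hUconv : Convex ℝ U)
    (f : EuclideanSpace ℝ (Fin n) → ℝ)
    (gradf : EuclideanSpace ℝ (Fin n) → EuclideanSpace ℝ (Fin n))
    (g : EuclideanSpace ℝ (Fin n) → EuclideanSpace ℝ (Fin p))
    (Dg : EuclideanSpace ℝ (Fin n) → Fin p → EuclideanSpace ℝ (Fin n))
    (σf cg : ℝ) (hσf : 0 < σf) (hcg : 0 < cg)
    -- f is differentiable with gradient gradf, and σf-strongly convex on U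
    (hstrconv : ∀ u ∈ U, ∀ v ∈ U,
      f v + ⟪gradf v, u - v⟫ + σf / 2 * ‖u - v‖ ^ 2 ≤ f u)
    -- each gᵢ is differentiable with gradient Dg · i and convex on U
    (hgdiff : ∀ i : Fin p, ∀ v ∈ U, HasGradientAt (fun w => g w i) (Dg v i) v)
    (hgconv : ∀ i : Fin p, ∀ u ∈ U, ∀ v ∈ U,
      g v i + ⟪Dg v i, u - v⟫ ≤ g u i)
    -- the Jacobian of g is bounded by cg in Frobenius norm on U
    (hjac : ∀ u ∈ U, Real.sqrt (∑ i, ‖Dg u i‖ ^ 2) ≤ cg)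
    -- ux x is the minimizer of the Lagrangian L(·, x) over U
    (ux : EuclideanSpace ℝ (Fin p) → EuclideanSpace ℝ (Fin n))
    (hmem : ∀ x : EuclideanSpace ℝ (Fin p), (∀ i, 0 ≤ x i) → ux x ∈ U)
    (hmin : ∀ x : EuclideanSpace ℝ (Fin p), (∀ i, 0 ≤ x i) → ∀ u ∈ U,
      f (ux x) + ∑ i, x i * g (ux x) i ≤ f u + ∑ i, x i * g u i) :
    ∀ x xbar : EuclideanSpace ℝ (Fin p), (∀ i, 0 ≤ x i) → (∀ i, 0 ≤ xbar i) →
      ‖ux x - ux xbar‖ ≤ cg / σf * ‖x - xbar‖ := by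
  intro x xbar hx hxbar
  have hL : ∀ z : EuclideanSpace ℝ (Fin p), (∀ i, 0 ≤ z i) →
      StrongConvexOn U σf (lagrangian f g z) := fun z hz =>
    strongConvexOn_lagrangian (strongConvexOn_of_add_inner_le hUconv gradf hstrconv)
      (fun i => convexOn_of_add_inner_le hUconv (Dg · i) (hgconv i)) hz
  have hminOn : ∀ z : EuclideanSpace ℝ (Fin p), (∀ i, 0 ≤ z i) →
      IsMinOn (lagrangian f g z) U (ux z) := fun z hz => isMinOn_iff.2 fun u hu => by
    simpa only [lagrangian_apply_eq_sum] using hmin z hz u hu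
  have hglip : ‖g (ux xbar) - g (ux x)‖ ≤ cg * ‖ux xbar - ux x‖ :=
    hUconv.norm_sub_le_of_hasGradientAt_apply hgdiff hjac (hmem xbar hxbar) (hmem x hx)
  have key : σf * ‖ux x - ux xbar‖ ^ 2 ≤ cg * ‖x - xbar‖ * ‖ux x - ux xbar‖ :=
    calc σf * ‖ux x - ux xbar‖ ^ 2 ≤ ⟪x - xbar, g (ux xbar) - g (ux x)⟫ :=
          mul_sq_norm_sub_le_inner_of_isMinOn_lagrangian (hL x hx) (hL xbar hxbar)
            (hmem x hx) (hmem xbar hxbar) (hminOn x hx) (hminOn xbar hxbar)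
      _ ≤ ‖x - xbar‖ * ‖g (ux xbar) - g (ux x)‖ := real_inner_le_norm _ _
      _ ≤ ‖x - xbar‖ * (cg * ‖ux xbar - ux x‖) := by gcongr
      _ = cg * ‖x - xbar‖ * ‖ux x - ux xbar‖ := by rw [norm_sub_rev (ux xbar)]; ring
  rcases (norm_nonneg (ux x - ux xbar)).eq_or_lt with h0 | hpos
  · rw [← h0]
    exact mul_nonneg (div_nonneg hcg.le hσf.le) (norm_nonneg _)
  · rw [div_mul_eq_mul_div, le_div_iff₀ hσf]
    exact le_of_mul_le_mul_right (by linear_combination key) hpos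

/-- the map `x ↦ u(x) = argmin_{u ∈ U} [f(u) + ⟨x, g(u)⟩]` is
Lipschitz on the nonnegative orthant with constant `c_g / σ_f`. -/
theorem lagrangian_minimizer_lipschitz {n p : ℕ}
    (U : Set (EuclideanSpace ℝ (Fin n)))
    (hUconv : Convex ℝ U) (hUclosed : IsClosed U)
    (f : EuclideanSpace ℝ (Fin n) → ℝ)
    (gradf : EuclideanSpace ℝ (Fin n) → EuclideanSpace ℝ (Fin n))
    (g : EuclideanSpace ℝ (Fin n) → EuclideanSpace ℝ (Fin p))
    (Dg : EuclideanSpace ℝ (Fin n) → Fin p → EuclideanSpace ℝ (Fin n))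
    (σf cg : ℝ) (hσf : 0 < σf) (hcg : 0 < cg)
    -- f is differentiable with gradient gradf, and σf-strongly convex on U
    (hfdiff : ∀ v ∈ U, HasGradientAt f (gradf v) v)
    (hstrconv : ∀ u ∈ U, ∀ v ∈ U,
      f v + ⟪gradf v, u - v⟫ + σf / 2 * ‖u - v‖ ^ 2 ≤ f u)
    -- each gᵢ is differentiable with gradient Dg · i and convex on U
    (hgdiff : ∀ i : Fin p, ∀ v ∈ U, HasGradientAt (fun w => g w i) (Dg v i) v)
    (hgconv : ∀ i : Fin p, ∀ u ∈ U, ∀ v ∈ U,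
      g v i + ⟪Dg v i, u - v⟫ ≤ g u i)
    -- the Jacobian of g is bounded by cg in Frobenius norm on U
    (hjac : ∀ u ∈ U, Real.sqrt (∑ i, ‖Dg u i‖ ^ 2) ≤ cg)
    -- ux x is the minimizer of the Lagrangian L(·, x) over U
    (ux : EuclideanSpace ℝ (Fin p) → EuclideanSpace ℝ (Fin n))
    (hmem : ∀ x : EuclideanSpace ℝ (Fin p), (∀ i, 0 ≤ x i) → ux x ∈ U)
    (hmin : ∀ x : EuclideanSpace ℝ (Fin p), (∀ i, 0 ≤ x i) → ∀ u ∈ U,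
      f (ux x) + ∑ i, x i * g (ux x) i ≤ f u + ∑ i, x i * g u i) :
    ∀ x xbar : EuclideanSpace ℝ (Fin p), (∀ i, 0 ≤ x i) → (∀ i, 0 ≤ xbar i) →
      ‖ux x - ux xbar‖ ≤ cg / σf * ‖x - xbar‖ :=
  lagrangian_minimizer_lipschitz_general U hUconv f gradf g Dg σf cg hσf hcg hstrconv hgdiff hgconv
    hjac ux hmem hmin
end

section
/- For any x ∈ ℝᵖ₊, the unique minimizer u(x) of the Lagrangian satisfies (σ_f/2)‖u(x) − u*‖² ≤ f* − d(x), where u* is the unique primal optimal solution and f* the primal optimal value. -/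
open scoped RealInnerProductSpace

/-- for any `x ≥ 0`, the exact Lagrangian minimizer `u(x)`
satisfies `(σ_f/2)‖u(x) − u*‖² ≤ f* − d(x)`. -/
theorem dist_minimizer_to_optimum {n p : ℕ}
    (U : Set (EuclideanSpace ℝ (Fin n)))
    (hUconv : Convex ℝ U) (hUclosed : IsClosed U)
    (f : EuclideanSpace ℝ (Fin n) → ℝ)
    (g : EuclideanSpace ℝ (Fin n) → EuclideanSpace ℝ (Fin p))
    (σf : ℝ) (hσf : 0 < σf)
    (d : EuclideanSpace ℝ (Fin p) → ℝ)
    (ux : EuclideanSpace ℝ (Fin p) → EuclideanSpace ℝ (Fin n))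
    -- u* is the (unique) primal optimal solution with value f*
    (ustar : EuclideanSpace ℝ (Fin n)) (fstar : ℝ)
    (hustar_mem : ustar ∈ U) (hustar_feas : ∀ i, g ustar i ≤ 0)
    (hfstar : fstar = f ustar)
    -- strong convexity of the Lagrangian around its minimizer ux x:
    -- L(u,x) ≥ d(x) + (σ_f/2)‖u(x) − u‖² for all u ∈ U, x ≥ 0
    (hmem : ∀ x : EuclideanSpace ℝ (Fin p), (∀ i, 0 ≤ x i) → ux x ∈ U)
    (hstrong : ∀ x : EuclideanSpace ℝ (Fin p), (∀ i, 0 ≤ x i) → ∀ u ∈ U,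
      d x + σf / 2 * ‖ux x - u‖ ^ 2 ≤ f u + ∑ i, x i * g u i) :
    ∀ x : EuclideanSpace ℝ (Fin p), (∀ i, 0 ≤ x i) →
      σf / 2 * ‖ux x - ustar‖ ^ 2 ≤ fstar - d x := by
  intro x hx
  have h := hstrong x hx ustar hustar_mem
  have hsum : ∑ i, x i * g ustar i ≤ 0 :=
    Finset.sum_nonpos fun i _ => mul_nonpos_of_nonneg_of_nonpos (hx i) (hustar_feas i)
  rw [hfstar]
  linarith
end

section
/- Let d: ℝᵖ₊ → ℝ be concave with the inexact oracle property 0 ≤ d̃(y) + ⟨∇̃d(y), x−y⟩ − d(x) ≤ L_d‖x−y‖² + 3δ and d(x) ≤ d̃(x) for all x,y ∈ ℝᵖ₊. If x̂ ∈ ℝᵖ₊ and x⁺ = [x̂ + (1/(2L_d))∇̃d(x̂)]₊ (projection onto ℝᵖ₊), then d(x⁺) ≥ d̃(x̂) + L_d‖x⁺ − x̂‖² − 3δ ≥ d(x̂) − 3δ. -/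
/-!
Testing the optimality condition of the projection `x⁺` at the feasible point `x̂` gives
`2 L_d ‖x⁺ - x̂‖² ≤ ⟪∇̃d(x̂), x⁺ - x̂⟫`; the upper oracle bound at `(x⁺, x̂)` then yields
`d(x⁺) ≥ d̃(x̂) + L_d ‖x⁺ - x̂‖² - 3δ`, and `d(x̂) ≤ d̃(x̂)` gives the other inequality.
-/

open scoped RealInnerProductSpace

theorem sq_max_add_mul_zero_sub_le {a : ℝ} (ha : 0 ≤ a) (t g : ℝ) :
    (max (a + t * g) 0 - a) ^ 2 ≤ t * g * (max (a + t * g) 0 - a) := by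
  rcases le_total 0 (a + t * g) with h | h
  · rw [max_eq_left h, add_sub_cancel_left]; exact (sq _).le
  · rw [max_eq_right h]; nlinarith

theorem norm_sq_sub_le_inner_of_eq_max {ι : Type*} [Fintype ι] {x y : EuclideanSpace ℝ ι}
    (hx : ∀ i, 0 ≤ x i) (t : ℝ) (g : EuclideanSpace ℝ ι)
    (hy : ∀ i, y i = max (x i + t * g i) 0) :
    ‖y - x‖ ^ 2 ≤ t * ⟪g, y - x⟫ := by
  simp only [EuclideanSpace.real_norm_sq_eq, PiLp.inner_apply, PiLp.sub_apply, Finset.mul_sum]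
  refine Finset.sum_le_sum fun i _ => ?_
  simpa only [hy, RCLike.inner_apply, conj_trivial, mul_assoc, mul_comm (g i)] using
    sq_max_add_mul_zero_sub_le (hx i) t (g i)

theorem inexact_gradient_step_descent_general {p : ℕ}
    (Ld δ : ℝ) (hLd : 0 < Ld)
    (d dt : EuclideanSpace ℝ (Fin p) → ℝ)
    (gt : EuclideanSpace ℝ (Fin p) → EuclideanSpace ℝ (Fin p))
    -- inexact oracle property
    (horacle : ∀ x y : EuclideanSpace ℝ (Fin p), (∀ i, 0 ≤ x i) → (∀ i, 0 ≤ y i) →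
      0 ≤ dt y + ⟪gt y, x - y⟫ - d x ∧
      dt y + ⟪gt y, x - y⟫ - d x ≤ Ld * ‖x - y‖ ^ 2 + 3 * δ)
    (hdle : ∀ x : EuclideanSpace ℝ (Fin p), (∀ i, 0 ≤ x i) → d x ≤ dt x)
    (xhat : EuclideanSpace ℝ (Fin p)) (hxhat : ∀ i, 0 ≤ xhat i)
    (xplus : EuclideanSpace ℝ (Fin p))
    (hxplus : xplus = fun i => max (xhat i + 1 / (2 * Ld) * gt xhat i) 0) :
    d xhat - 3 * δ ≤ dt xhat + Ld * ‖xplus - xhat‖ ^ 2 - 3 * δ ∧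
    dt xhat + Ld * ‖xplus - xhat‖ ^ 2 - 3 * δ ≤ d xplus := by
  have hxplus_nonneg : ∀ i, 0 ≤ xplus i := fun i => hxplus ▸ le_max_right _ _
  have hstep : ‖xplus - xhat‖ ^ 2 ≤ 1 / (2 * Ld) * ⟪gt xhat, xplus - xhat⟫ :=
    norm_sq_sub_le_inner_of_eq_max hxhat _ _ (congrFun hxplus)
  have hstep' : 2 * Ld * ‖xplus - xhat‖ ^ 2 ≤ ⟪gt xhat, xplus - xhat⟫ := by
    rwa [one_div, ← div_eq_inv_mul, le_div_iff₀' (by positivity)] at hstep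
  have hupper := (horacle xplus xhat hxplus_nonneg hxhat).2
  constructor
  · linarith [hdle xhat hxhat, mul_nonneg hLd.le (sq_nonneg ‖xplus - xhat‖)]
  · linarith

/-- one inexact projected-gradient step on the dual,
`x⁺ = [x̂ + (1/(2L_d)) ∇̃d(x̂)]₊`, satisfies
`d(x⁺) ≥ d̃(x̂) + L_d‖x⁺ − x̂‖² − 3δ ≥ d(x̂) − 3δ`. -/
theorem inexact_gradient_step_descent {p : ℕ}
    (Ld δ : ℝ) (hLd : 0 < Ld) (hδ : 0 ≤ δ)
    (d dt : EuclideanSpace ℝ (Fin p) → ℝ)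
    (gt : EuclideanSpace ℝ (Fin p) → EuclideanSpace ℝ (Fin p))
    -- d is concave on the nonnegative orthant
    (hconc : ConcaveOn ℝ {x : EuclideanSpace ℝ (Fin p) | ∀ i, 0 ≤ x i} d)
    -- inexact oracle property
    (horacle : ∀ x y : EuclideanSpace ℝ (Fin p), (∀ i, 0 ≤ x i) → (∀ i, 0 ≤ y i) →
      0 ≤ dt y + ⟪gt y, x - y⟫ - d x ∧
      dt y + ⟪gt y, x - y⟫ - d x ≤ Ld * ‖x - y‖ ^ 2 + 3 * δ)
    (hdle : ∀ x : EuclideanSpace ℝ (Fin p), (∀ i, 0 ≤ x i) → d x ≤ dt x)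
    (xhat : EuclideanSpace ℝ (Fin p)) (hxhat : ∀ i, 0 ≤ xhat i)
    (xplus : EuclideanSpace ℝ (Fin p))
    (hxplus : xplus = fun i => max (xhat i + 1 / (2 * Ld) * gt xhat i) 0) :
    d xhat - 3 * δ ≤ dt xhat + Ld * ‖xplus - xhat‖ ^ 2 - 3 * δ ∧
    dt xhat + Ld * ‖xplus - xhat‖ ^ 2 - 3 * δ ≤ d xplus :=
  inexact_gradient_step_descent_general Ld δ hLd d dt gt horacle hdle xhat hxhat xplus hxplus
end

section
/- Consider the inexact dual gradient iteration x^{j+1} = [x^j + (1/(2L_d))∇̃d(x^j)]₊ on ℝᵖ₊ satisfying ‖x^{j+1} − x‖² ≤ ‖x^j − x‖² − (1/L_d)⟨∇̃d(x^j), x − x^j⟩ + (1/L_d)(d(x^{j+1}) − d̃(x^j) + 3δ) for all x ≥ 0, together with d(x) ≤ d̃(x^j) + ⟨∇̃d(x^j), x − x^j⟩. Then for a dual optimal x*, ‖x^{k+1} − x*‖ ≤ ‖x⁰ − x*‖ + √(3δ(k+1)/L_d) for all k ≥ 0. -/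
open scoped RealInnerProductSpace

/-- boundedness of the inexact dual gradient iterates:
`‖x^{k+1} − x*‖ ≤ ‖x⁰ − x*‖ + √(3δ(k+1)/L_d)`. -/
theorem inexact_dual_gradient_iterates_bounded {p : ℕ}
    (Ld δ : ℝ) (hLd : 0 < Ld) (hδ : 0 ≤ δ)
    (d dt : EuclideanSpace ℝ (Fin p) → ℝ)
    (gt : EuclideanSpace ℝ (Fin p) → EuclideanSpace ℝ (Fin p))
    (x : ℕ → EuclideanSpace ℝ (Fin p))
    (hx0 : ∀ i, 0 ≤ x 0 i)
    -- projected inexact gradient update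
    (hupd : ∀ j : ℕ, x (j + 1) = fun i => max (x j i + 1 / (2 * Ld) * gt (x j) i) 0)
    -- descent inequality
    (hdesc : ∀ j : ℕ, ∀ z : EuclideanSpace ℝ (Fin p), (∀ i, 0 ≤ z i) →
      ‖x (j + 1) - z‖ ^ 2 ≤ ‖x j - z‖ ^ 2 - 1 / Ld * ⟪gt (x j), z - x j⟫ +
        1 / Ld * (d (x (j + 1)) - dt (x j) + 3 * δ))
    -- inexact linearization upper bounds d
    (hlin : ∀ j : ℕ, ∀ z : EuclideanSpace ℝ (Fin p), (∀ i, 0 ≤ z i) →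
      d z ≤ dt (x j) + ⟪gt (x j), z - x j⟫)
    -- x* is a dual maximizer
    (xstar : EuclideanSpace ℝ (Fin p)) (hxstar : ∀ i, 0 ≤ xstar i)
    (hmax : ∀ z : EuclideanSpace ℝ (Fin p), (∀ i, 0 ≤ z i) → d z ≤ d xstar) :
    ∀ k : ℕ, ‖x (k + 1) - xstar‖ ≤
      ‖x 0 - xstar‖ + Real.sqrt (3 * δ * (k + 1) / Ld) := by
  -- all iterates are nonnegative
  have hnn : ∀ j : ℕ, ∀ i, 0 ≤ x j i := by
    intro j
    induction j with
    | zero => exact hx0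
    | succ n _ => intro i; rw [hupd n]; exact le_max_right _ _
  -- one-step inequality
  have hstep : ∀ j : ℕ, ‖x (j + 1) - xstar‖ ^ 2 ≤ ‖x j - xstar‖ ^ 2 + 3 * δ / Ld := by
    intro j
    have h1 := hdesc j xstar hxstar
    have h2 := hlin j xstar hxstar
    have h3 := hmax (x (j + 1)) (hnn (j + 1))
    have hLd' : (0:ℝ) ≤ 1 / Ld := by positivity
    have hdiv : 3 * δ / Ld = 1 / Ld * (3 * δ) := by ring
    have hineq : - (1 / Ld * ⟪gt (x j), xstar - x j⟫) ≤ 1 / Ld * (dt (x j) - d xstar) := by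
      have h5 : d xstar - dt (x j) ≤ ⟪gt (x j), xstar - x j⟫ := by linarith
      nlinarith [mul_le_mul_of_nonneg_left h5 hLd']
    have h4 : 1 / Ld * (d (x (j + 1)) - dt (x j) + 3 * δ) + 1 / Ld * (dt (x j) - d xstar)
        ≤ 3 * δ / Ld := by
      have h6 : d (x (j + 1)) - d xstar ≤ 0 := by linarith
      rw [hdiv]
      nlinarith [mul_le_mul_of_nonneg_left h6 hLd']
    linarith
  -- telescoping
  have htel : ∀ k : ℕ, ‖x (k + 1) - xstar‖ ^ 2 ≤ ‖x 0 - xstar‖ ^ 2 + 3 * δ * (k + 1) / Ld := by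
    intro k
    induction k with
    | zero =>
      have h := hstep 0
      norm_num at h ⊢
      linarith
    | succ n ih =>
      have h := hstep (n + 1)
      push_cast at ih ⊢
      have hq : 3 * δ * ((n:ℝ) + 1 + 1) / Ld = 3 * δ * ((n:ℝ) + 1) / Ld + 3 * δ / Ld := by ring
      rw [hq]
      linarith
  intro k
  have h := htel k
  set a := ‖x 0 - xstar‖ with ha
  set b := 3 * δ * (k + 1) / Ld with hb
  have hbnn : 0 ≤ b := by positivity
  have hann : 0 ≤ a := norm_nonneg _
  have hsq : ‖x (k + 1) - xstar‖ ^ 2 ≤ (a + Real.sqrt b) ^ 2 := by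
    have hsb : Real.sqrt b ^ 2 = b := Real.sq_sqrt hbnn
    nlinarith [Real.sqrt_nonneg b, mul_nonneg hann (Real.sqrt_nonneg b)]
  calc ‖x (k + 1) - xstar‖ = Real.sqrt (‖x (k + 1) - xstar‖ ^ 2) :=
        (Real.sqrt_sq (norm_nonneg _)).symm
    _ ≤ Real.sqrt ((a + Real.sqrt b) ^ 2) := Real.sqrt_le_sqrt hsq
    _ = a + Real.sqrt b := Real.sqrt_sq (by positivity)
end

section
/- In the inexact dual gradient method with x⁰ = 0, the primal average û^k satisfies the upper suboptimality bound f(û^k) − f* ≤ L_d‖x⁰‖²/(k+1) + 3δ = 3δ. -/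
open scoped RealInnerProductSpace

/-- upper suboptimality bound of the primal average in the
inexact dual gradient method started at `x⁰ = 0`:
`f(û^k) − f* ≤ L_d‖x⁰‖²/(k+1) + 3δ = 3δ`. -/
theorem idgm_average_suboptimality_upper {n p : ℕ}
    (U : Set (EuclideanSpace ℝ (Fin n))) (hUconv : Convex ℝ U)
    (f : EuclideanSpace ℝ (Fin n) → ℝ) (hfconv : ConvexOn ℝ U f)
    (g : EuclideanSpace ℝ (Fin n) → EuclideanSpace ℝ (Fin p))
    (Ld δ fstar : ℝ) (hLd : 0 < Ld) (hδ : 0 ≤ δ)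
    (d : EuclideanSpace ℝ (Fin p) → ℝ)
    (u : ℕ → EuclideanSpace ℝ (Fin n)) (hu : ∀ j, u j ∈ U)
    (x : ℕ → EuclideanSpace ℝ (Fin p)) (hx0 : x 0 = 0)
    (hupd : ∀ j : ℕ, x (j + 1) = fun i => max (x j i + 1 / (2 * Ld) * g (u j) i) 0)
    -- descent inequality with d̃(x^j) = f(u^j) + ⟨x^j, g(u^j)⟩, ∇̃d(x^j) = g(u^j)
    (hdesc : ∀ j : ℕ, ∀ z : EuclideanSpace ℝ (Fin p), (∀ i, 0 ≤ z i) →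
      ‖x (j + 1) - z‖ ^ 2 ≤ ‖x j - z‖ ^ 2 - 1 / Ld * ⟪g (u j), z - x j⟫ +
        1 / Ld * (d (x (j + 1)) - (f (u j) + ∑ i, x j i * g (u j) i) + 3 * δ))
    -- weak duality
    (hweak : ∀ j : ℕ, d (x (j + 1)) ≤ fstar) :
    ∀ k : ℕ, ∀ uhat : EuclideanSpace ℝ (Fin n),
      uhat = ((k + 1 : ℝ))⁻¹ • ∑ j ∈ Finset.range (k + 1), u j →
      f uhat - fstar ≤ Ld * ‖x 0‖ ^ 2 / (k + 1) + 3 * δ ∧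
      f uhat - fstar ≤ 3 * δ := by

  intro k uhat huhat
  -- per-step bound
  have key : ∀ j : ℕ, f (u j) ≤ fstar + 3 * δ + Ld * (‖x j‖ ^ 2 - ‖x (j+1)‖ ^ 2) := by
    intro j
    have h := hdesc j 0 (by intro i; simp)
    have hinner : ⟪g (u j), (0 : EuclideanSpace ℝ (Fin p)) - x j⟫ =
        - ∑ i, x j i * g (u j) i := by
      simp [PiLp.inner_apply, Finset.sum_neg_distrib, mul_comm]
    have hw := hweak j
    simp only [sub_zero, hinner] at h
    have h2 : ‖x (j+1)‖ ^ 2 ≤ ‖x j‖ ^ 2 + 1 / Ld * (d (x (j+1)) - f (u j) + 3 * δ) :=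
      le_of_le_of_eq h (by ring)
    have h3 := mul_le_mul_of_nonneg_left
      (by linarith : 1 / Ld * (f (u j) - d (x (j+1)) - 3 * δ) ≤ ‖x j‖ ^ 2 - ‖x (j+1)‖ ^ 2)
      hLd.le
    have hc : Ld * (1 / Ld) = 1 := mul_one_div_cancel hLd.ne'
    rw [← mul_assoc, hc, one_mul] at h3
    linarith
  -- sum over j and telescope
  have hsum : ∑ j ∈ Finset.range (k+1), f (u j) ≤
      (k+1) * (fstar + 3 * δ) + Ld * (‖x 0‖ ^ 2 - ‖x (k+1)‖ ^ 2) := by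
    calc ∑ j ∈ Finset.range (k+1), f (u j)
        ≤ ∑ j ∈ Finset.range (k+1), (fstar + 3 * δ + Ld * (‖x j‖ ^ 2 - ‖x (j+1)‖ ^ 2)) :=
          Finset.sum_le_sum (fun j _ => key j)
      _ = (k+1) * (fstar + 3 * δ) + Ld * ∑ j ∈ Finset.range (k+1),
            (‖x j‖ ^ 2 - ‖x (j+1)‖ ^ 2) := by
          rw [Finset.sum_add_distrib, Finset.sum_const, ← Finset.mul_sum]
          simp [Finset.card_range]; push_cast; ring
      _ = (k+1) * (fstar + 3 * δ) + Ld * (‖x 0‖ ^ 2 - ‖x (k+1)‖ ^ 2) := by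
          rw [Finset.sum_range_sub' (fun j => ‖x j‖ ^ 2)]
  have hx0n : ‖x 0‖ = 0 := by rw [hx0]; simp
  have hk1 : (0:ℝ) < (k:ℝ) + 1 := by positivity
  -- Jensen
  have hjensen : f uhat ≤ ((k+1:ℝ))⁻¹ * ∑ j ∈ Finset.range (k+1), f (u j) := by
    have h := hfconv.map_sum_le (t := Finset.range (k+1))
      (w := fun _ => ((k+1:ℝ))⁻¹) (p := u)
      (fun i _ => by positivity)
      (by simp [Finset.sum_const]; field_simp)
      (fun i _ => hu i)
    rw [huhat, Finset.smul_sum]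
    calc f (∑ j ∈ Finset.range (k+1), ((k+1:ℝ))⁻¹ • u j)
        ≤ ∑ j ∈ Finset.range (k+1), ((k+1:ℝ))⁻¹ * f (u j) := h
      _ = ((k+1:ℝ))⁻¹ * ∑ j ∈ Finset.range (k+1), f (u j) := by rw [Finset.mul_sum]
  have hxk : (0:ℝ) ≤ ‖x (k+1)‖ ^ 2 := by positivity
  have hfin : f uhat - fstar ≤ 3 * δ := by
    have h2 : f uhat ≤ ((k+1:ℝ))⁻¹ * ((k+1) * (fstar + 3 * δ) + Ld * (‖x 0‖ ^ 2 - ‖x (k+1)‖ ^ 2)) := by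
      refine hjensen.trans ?_
      apply mul_le_mul_of_nonneg_left hsum (by positivity)
    rw [hx0n] at h2
    have : Ld * ((0:ℝ)^2 - ‖x (k+1)‖ ^ 2) ≤ 0 := by nlinarith
    have h3 : ((k+1:ℝ))⁻¹ * ((k+1) * (fstar + 3 * δ) + Ld * ((0:ℝ)^2 - ‖x (k+1)‖ ^ 2))
        ≤ fstar + 3 * δ := by
      rw [mul_add, inv_mul_cancel_left₀ (ne_of_gt hk1)]
      nlinarith [mul_le_mul_of_nonneg_left this (le_of_lt (by positivity : (0:ℝ) < ((k:ℝ)+1)⁻¹))]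
    linarith [h2.trans h3]
  constructor
  · rw [hx0n]
    have : Ld * (0:ℝ)^2 / (k+1) = 0 := by simp
    rw [this, zero_add]; exact hfin
  · exact hfin
end

section
/- For the inexact dual fast gradient method, given the estimate sequence inequality ((k+1)(k+2)/4)d(x^k) + ((k+1)(k+2)(k+3)/4)δ ≥ max_{x≥0}(−L_d‖x−y⁰‖² + Σ_{j=0}^k ((j+1)/2)[d̃(y^j) + ⟨∇̃d(y^j), x − y^j⟩]), with d̃(y^j) = f(u^j) + ⟨y^j, g(u^j)⟩ and ∇̃d(y^j) = g(u^j), the weighted primal average û^k = (2/((k+1)(k+2)))Σ_{j=0}^k (j+1)u^j satisfies max_{x≥0}(−(4L_d/(k+1)²)‖x − y⁰‖² + ⟨x, g(û^k)⟩) ≤ d(x^k) − f(û^k) + (k+3)δ. -/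
open scoped RealInnerProductSpace

lemma idfgm_aux_sum (m : ℕ) :
    ∑ j ∈ Finset.range (m + 1), ((j : ℝ) + 1) = ((m : ℝ) + 1) * ((m : ℝ) + 2) / 2 := by
  induction m with
  | zero => norm_num
  | succ l ih => rw [Finset.sum_range_succ, ih]; push_cast; ring

/-- from the estimate-sequence inequality of the inexact dual
fast gradient method, the weighted primal average `û^k` satisfies
`−(4L_d/(k+1)²)‖x − y⁰‖² + ⟨x, g(û^k)⟩ ≤ d(x^k) − f(û^k) + (k+3)δ` for all
`x ≥ 0`. -/
theorem idfgm_estimate_sequence_consequence {n p : ℕ}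
    (U : Set (EuclideanSpace ℝ (Fin n))) (hUconv : Convex ℝ U)
    (f : EuclideanSpace ℝ (Fin n) → ℝ) (hfconv : ConvexOn ℝ U f)
    (g : EuclideanSpace ℝ (Fin n) → EuclideanSpace ℝ (Fin p))
    (hgconv : ∀ i : Fin p, ConvexOn ℝ U (fun v => g v i))
    (Ld δ : ℝ) (hLd : 0 < Ld) (hδ : 0 ≤ δ)
    (d : EuclideanSpace ℝ (Fin p) → ℝ)
    (u : ℕ → EuclideanSpace ℝ (Fin n)) (hu : ∀ j, u j ∈ U)
    (y : ℕ → EuclideanSpace ℝ (Fin p))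
    (k : ℕ) (xk : EuclideanSpace ℝ (Fin p))
    -- estimate sequence inequality with d̃(y^j) = f(u^j) + ⟨y^j, g(u^j)⟩,
    -- ∇̃d(y^j) = g(u^j)
    (hest : ∀ z : EuclideanSpace ℝ (Fin p), (∀ i, 0 ≤ z i) →
      -Ld * ‖z - y 0‖ ^ 2 + ∑ j ∈ Finset.range (k + 1), ((j : ℝ) + 1) / 2 *
          ((f (u j) + ∑ i, y j i * g (u j) i) + ∑ i, g (u j) i * (z i - y j i)) ≤
        ((k : ℝ) + 1) * ((k : ℝ) + 2) / 4 * d xk +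
        ((k : ℝ) + 1) * ((k : ℝ) + 2) * ((k : ℝ) + 3) / 4 * δ) :
    ∀ uhat : EuclideanSpace ℝ (Fin n),
      uhat = (2 / (((k : ℝ) + 1) * ((k : ℝ) + 2))) •
        ∑ j ∈ Finset.range (k + 1), ((j : ℝ) + 1) • u j →
      ∀ z : EuclideanSpace ℝ (Fin p), (∀ i, 0 ≤ z i) →
        -(4 * Ld / ((k : ℝ) + 1) ^ 2) * ‖z - y 0‖ ^ 2 + ∑ i, z i * g uhat i ≤
          d xk - f uhat + ((k : ℝ) + 3) * δ := by
  intro uhat huhat z hz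
  set a : ℝ := (k : ℝ) + 1 with ha
  set b : ℝ := (k : ℝ) + 2 with hb
  have ha0 : (0:ℝ) < a := by positivity
  have hb0 : (0:ℝ) < b := by positivity
  have hab : (0:ℝ) < a * b := mul_pos ha0 hb0
  set w : ℕ → ℝ := fun j => 2 * ((j : ℝ) + 1) / (a * b) with hwdef
  have hw0 : ∀ j ∈ Finset.range (k + 1), 0 ≤ w j := fun j _ => by positivity
  have hsum : ∑ j ∈ Finset.range (k + 1), ((j : ℝ) + 1) = a * b / 2 := by
    rw [ha, hb]; exact idfgm_aux_sum k
  have hw1 : ∑ j ∈ Finset.range (k + 1), w j = 1 := by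
    have h : ∑ j ∈ Finset.range (k + 1), w j
        = (∑ j ∈ Finset.range (k + 1), ((j : ℝ) + 1)) * 2 / (a * b) := by
      rw [Finset.sum_mul, Finset.sum_div]
      apply Finset.sum_congr rfl
      intro j _
      simp only [hwdef]; ring
    rw [h, hsum]; field_simp
  have huhat' : uhat = ∑ j ∈ Finset.range (k + 1), w j • u j := by
    rw [huhat, Finset.smul_sum]
    apply Finset.sum_congr rfl
    intro j _
    have hc : (2 / (a * b)) * ((j : ℝ) + 1) = w j := by simp only [hwdef]; ring
    rw [smul_smul, hc]
  have hmem : ∀ j ∈ Finset.range (k + 1), u j ∈ U := fun j _ => hu j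
  have hfJ : f uhat ≤ ∑ j ∈ Finset.range (k + 1), w j * f (u j) := by
    rw [huhat']
    simpa [smul_eq_mul] using hfconv.map_sum_le hw0 hw1 hmem
  have hgJ : ∀ i, g uhat i ≤ ∑ j ∈ Finset.range (k + 1), w j * g (u j) i := by
    intro i
    rw [huhat']
    simpa [smul_eq_mul] using (hgconv i).map_sum_le hw0 hw1 hmem
  have hS : ∑ i, z i * g uhat i
      ≤ ∑ j ∈ Finset.range (k + 1), w j * ∑ i, z i * g (u j) i := by
    calc ∑ i, z i * g uhat i
        ≤ ∑ i, z i * (∑ j ∈ Finset.range (k + 1), w j * g (u j) i) :=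
          Finset.sum_le_sum fun i _ => mul_le_mul_of_nonneg_left (hgJ i) (hz i)
      _ = ∑ j ∈ Finset.range (k + 1), w j * ∑ i, z i * g (u j) i := by
          simp_rw [Finset.mul_sum]
          rw [Finset.sum_comm]
          apply Finset.sum_congr rfl
          intro j _
          apply Finset.sum_congr rfl
          intro i _
          ring
  set N : ℝ := ‖z - y 0‖ ^ 2 with hN
  have hN0 : 0 ≤ N := by positivity
  have hkey : a * b / 4 * (f uhat + ∑ i, z i * g uhat i)
      ≤ Ld * N + a * b / 4 * d xk + a * b * ((k : ℝ) + 3) / 4 * δ := by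
    have hest' := hest z hz
    rw [← hN] at hest'
    have hterm : ∀ j ∈ Finset.range (k + 1),
        ((j : ℝ) + 1) / 2 *
          ((f (u j) + ∑ i, y j i * g (u j) i) + ∑ i, g (u j) i * (z i - y j i))
        = a * b / 4 * (w j * (f (u j) + ∑ i, z i * g (u j) i)) := by
      intro j _
      have h1 : (f (u j) + ∑ i, y j i * g (u j) i) + ∑ i, g (u j) i * (z i - y j i)
          = f (u j) + ∑ i, z i * g (u j) i := by
        rw [add_assoc, ← Finset.sum_add_distrib]
        congr 1
        apply Finset.sum_congr rfl
        intro i _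
        ring
      rw [h1]
      simp only [hwdef]
      field_simp
      ring
    rw [Finset.sum_congr rfl hterm, ← Finset.mul_sum] at hest'
    have hJ : f uhat + ∑ i, z i * g uhat i
        ≤ ∑ j ∈ Finset.range (k + 1), w j * (f (u j) + ∑ i, z i * g (u j) i) := by
      simp_rw [mul_add, Finset.sum_add_distrib]
      exact add_le_add hfJ hS
    have h2 := mul_le_mul_of_nonneg_left hJ (by positivity : (0:ℝ) ≤ a * b / 4)
    linarith
  clear_value a b N
  have h3 : f uhat + ∑ i, z i * g uhat i - d xk - ((k : ℝ) + 3) * δ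
      ≤ 4 * Ld * N / (a * b) := by
    rw [le_div_iff₀ hab]
    nlinarith [hkey, hab, hN0]
  have hdiv : 4 * Ld * N / (a * b) ≤ 4 * Ld * N / a ^ 2 := by
    apply div_le_div_of_nonneg_left (by positivity) (by positivity)
    nlinarith [ha0]
  have heq : -(4 * Ld / a ^ 2) * N = -(4 * Ld * N / a ^ 2) := by ring
  rw [heq]
  linarith
end
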